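/- Fix $T \ge 2$, $d \ge 1$, and $L \ge 1$. For symmetric matrices $S_1, \dots, S_L \in \mathbb{R}^{d\times d}$ and input $X_0 \in \mathbb{R}^{T\times d}$, define $h^{(\ell)} \in \mathbb{R}^{T\times T}$ by $h^{(\ell)}_{ab} = (\mathbf{x}_a^\top S_\ell \mathbf{x}_b - \delta_{ab}\mathrm{Tr}\,S_\ell)/\sqrt{d}$ where $\mathbf{x}_a^\top$ are the rows of $X_0$. Define recursively $B^0 = I_T$ and $B^\ell = [c\,I_T + \sigma(B^{\ell-1} h^{(\ell)} (B^{\ell-1})^\top)]\,B^{\ell-1}$ for a fixed function $\sigma : \mathbb{R}^{T\times T} \to \mathbb{R}^{T\times T}$ and constant $c \ge 0$. Let $X_\ell = [c\,I_T + \sigma(H_\ell(X_{\ell-1}))]X_{\ell-1}$ where $H_\ell(X) = \frac{1}{\sqrt{d}}X S_\ell X^\top - \frac{\mathrm{Tr}\,S_\ell}{\sqrt{d}} B^{\ell-1}(B^{\ell-1})^\top$. Then for all $\ell = 0, \dots, L$: $X_\ell = B^\ell X_0$ and $H_\ell(X_{\ell-1}) = B^{\ell-1} h^{(\ell)} (B^{\ell-1})^\top$.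 -/
import Mathlib


open Matrix

/-- transport identity mapping deep self-attention with residual
connections onto the attention-indexed model: `X_ℓ = B^ℓ X₀` and
`H_ℓ(X_{ℓ-1}) = B^{ℓ-1} h^{(ℓ)} (B^{ℓ-1})ᵀ`. -/
theorem deep_attention_transport
    (T d L : ℕ) (hT : 2 ≤ T) (hd : 1 ≤ d) (hL : 1 ≤ L)
    (c : ℝ) (hc : 0 ≤ c)
    (S : ℕ → Matrix (Fin d) (Fin d) ℝ) (hS : ∀ ℓ, (S ℓ).IsSymm)
    (X₀ : Matrix (Fin T) (Fin d) ℝ)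
    (σ : Matrix (Fin T) (Fin T) ℝ → Matrix (Fin T) (Fin T) ℝ)
    -- the attention indices h^{(ℓ)} ∈ ℝ^{T×T}
    (h : ℕ → Matrix (Fin T) (Fin T) ℝ)
    (hh : ∀ ℓ, h ℓ = (Real.sqrt d)⁻¹ •
      (X₀ * S ℓ * X₀ᵀ - Matrix.trace (S ℓ) • (1 : Matrix (Fin T) (Fin T) ℝ)))
    -- the token-space operators B^ℓ
    (B : ℕ → Matrix (Fin T) (Fin T) ℝ)
    (hB0 : B 0 = 1)
    (hBrec : ∀ ℓ : ℕ, B (ℓ + 1) =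
      (c • (1 : Matrix (Fin T) (Fin T) ℝ) + σ (B ℓ * h (ℓ + 1) * (B ℓ)ᵀ)) * B ℓ)
    -- the logit map H_ℓ
    (H : ℕ → Matrix (Fin T) (Fin d) ℝ → Matrix (Fin T) (Fin T) ℝ)
    (hH : ∀ ℓ X, H ℓ X = (Real.sqrt d)⁻¹ • (X * S ℓ * Xᵀ)
      - (Matrix.trace (S ℓ) / Real.sqrt d) • (B (ℓ - 1) * (B (ℓ - 1))ᵀ))
    -- the hidden representations X_ℓ
    (Xs : ℕ → Matrix (Fin T) (Fin d) ℝ)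
    (hX0 : Xs 0 = X₀)
    (hXrec : ∀ ℓ : ℕ, Xs (ℓ + 1) =
      (c • (1 : Matrix (Fin T) (Fin T) ℝ) + σ (H (ℓ + 1) (Xs ℓ))) * Xs ℓ) :
    (∀ ℓ ≤ L, Xs ℓ = B ℓ * X₀) ∧
    (∀ ℓ < L, H (ℓ + 1) (Xs ℓ) = B ℓ * h (ℓ + 1) * (B ℓ)ᵀ) := by
  have key : ∀ ℓ : ℕ, Xs ℓ = B ℓ * X₀ ∧ H (ℓ + 1) (Xs ℓ) = B ℓ * h (ℓ + 1) * (B ℓ)ᵀ := by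
    have hstep : ∀ ℓ : ℕ, Xs ℓ = B ℓ * X₀ →
        H (ℓ + 1) (Xs ℓ) = B ℓ * h (ℓ + 1) * (B ℓ)ᵀ := by
      intro ℓ hx
      rw [hH, hx, hh]
      have : ℓ + 1 - 1 = ℓ := rfl
      rw [this]
      simp only [Matrix.transpose_mul, smul_sub, Matrix.mul_smul,
        Matrix.smul_mul, Matrix.mul_sub, Matrix.sub_mul, Matrix.mul_one,
        smul_smul, div_eq_inv_mul, Matrix.mul_assoc]
    intro ℓ
    induction ℓ with
    | zero =>
      have hx : Xs 0 = B 0 * X₀ := by rw [hX0, hB0, Matrix.one_mul]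
      exact ⟨hx, hstep 0 hx⟩
    | succ n ih =>
      have hx : Xs (n + 1) = B (n + 1) * X₀ := by
        rw [hXrec, ih.2, hBrec, ih.1]; simp [Matrix.mul_assoc]
      exact ⟨hx, hstep (n + 1) hx⟩
  exact ⟨fun ℓ _ => (key ℓ).1, fun ℓ _ => (key ℓ).2⟩
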